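/- arXiv:2507.08313 — 7 statements merged into one kernel-verified Lean document; each statement's English description precedes it below -/
import Mathlib

section
/- Let P be an m×n pattern with m ≤ n. There exists a matrix with pattern P all of whose singular values are equal and nonzero if and only if there exists a row-orthonormal matrix (i.e., Q Qᵀ = I) with pattern P. Moreover, in that case, every list of m positive reals is the list of singular values of some matrix with pattern P. -/
open Matrix

/-- The singular values of a real m×n matrix: nonnegative square roots of
the eigenvalues of A * Aᵀ (= A * Aᴴ over ℝ). -/
noncomputable def sv {m n : ℕ} (A : Matrix (Fin m) (Fin n) ℝ) : Fin m → ℝ :=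
  fun i => Real.sqrt ((Matrix.isHermitian_mul_conjTranspose_self A).eigenvalues i)

/-- A real matrix `A` has 0-1 pattern `P` if `A i j ≠ 0` exactly when `P i j = true`. -/
def HasPattern {m n : ℕ} (A : Matrix (Fin m) (Fin n) ℝ) (P : Matrix (Fin m) (Fin n) Bool) : Prop :=
  ∀ i j, A i j ≠ 0 ↔ P i j = true

/-!
If `A * Aᵀ = diagonal d`, the eigenvalues of `A * Aᵀ` are a rearrangement of `d`, since both
are the roots of the characteristic polynomial. If all singular values of `A` equal `c ≠ 0`,
the spectral theorem gives `A * Aᵀ = c² • 1`, so `c⁻¹ • A` is row-orthonormal with the pattern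
of `A`. Conversely, for row-orthonormal `Q` and positive `σ`, the matrix `diagonal σ * Q` has
the pattern of `Q` and `(diagonal σ * Q) * (diagonal σ * Q)ᵀ = diagonal (σ ^ 2)`.
-/

theorem exists_perm_of_map_univ_val_eq {ι β : Type*} [Fintype ι] {f g : ι → β}
    (h : Finset.univ.val.map f = Finset.univ.val.map g) :
    ∃ e : Equiv.Perm ι, ∀ i, f i = g (e i) := by
  classical
  have hfiber (c : β) : Fintype.card {i // f i = c} = Fintype.card {i // g i = c} := by
    have := congrArg (Multiset.count c) h
    simp only [Multiset.count_map, eq_comm (a := c)] at this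
    rw [Fintype.card_subtype, Fintype.card_subtype]
    exact this
  let e := Equiv.ofFiberEquiv fun c => Fintype.equivOfCardEq (hfiber c)
  exact ⟨e, fun i => (Equiv.ofFiberEquiv_map _ i).symm⟩

namespace Matrix.IsHermitian

variable {𝕜 n : Type*} [RCLike 𝕜] [Fintype n] [DecidableEq n] {A : Matrix n n 𝕜}

theorem map_eigenvalues_eq_of_eq_diagonal (hA : A.IsHermitian) {d : n → ℝ}
    (h : A = diagonal (RCLike.ofReal ∘ d)) :
    Finset.univ.val.map hA.eigenvalues = Finset.univ.val.map d := by
  have := hA.roots_charpoly_eq_eigenvalues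
  subst h
  rw [charpoly_diagonal, Polynomial.roots_prod _ _ (Finset.prod_ne_zero_iff.mpr
    fun i _ => Polynomial.X_sub_C_ne_zero _)] at this
  simp only [Function.comp_apply, Polynomial.roots_X_sub_C, Multiset.bind_singleton] at this
  refine Multiset.map_injective (RCLike.ofReal_injective (K := 𝕜)) ?_
  simpa [Multiset.map_map] using this.symm

theorem eq_smul_one_of_eigenvalues_eq (hA : A.IsHermitian) {r : ℝ}
    (h : ∀ i, hA.eigenvalues i = r) : A = r • 1 := by
  have hdiag : diagonal (RCLike.ofReal ∘ hA.eigenvalues) = r • (1 : Matrix n n 𝕜) := by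
    ext i j; simp [h, one_apply, diagonal_apply, RCLike.real_smul_eq_coe_mul]
  rw [hA.spectral_theorem, hdiag]
  simp [Unitary.conjStarAlgAut_apply]

end Matrix.IsHermitian

section

variable {m n : ℕ} {A : Matrix (Fin m) (Fin n) ℝ}

theorem HasPattern.smul {P : Matrix (Fin m) (Fin n) Bool} (hA : HasPattern A P) {c : ℝ}
    (hc : c ≠ 0) : HasPattern (c • A) P := fun i j => by
  rw [← hA i j, Matrix.smul_apply, smul_eq_mul, mul_ne_zero_iff, and_iff_right hc]

theorem HasPattern.diagonal_mul {P : Matrix (Fin m) (Fin n) Bool} (hA : HasPattern A P)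
    {d : Fin m → ℝ} (hd : ∀ i, d i ≠ 0) : HasPattern (diagonal d * A) P := fun i j => by
  rw [← hA i j, Matrix.diagonal_mul, mul_ne_zero_iff, and_iff_right (hd i)]

theorem exists_perm_sv_eq_sqrt {d : Fin m → ℝ} (h : A * Aᵀ = diagonal d) :
    ∃ e : Equiv.Perm (Fin m), ∀ i, sv A i = √(d (e i)) := by
  have hAH : A * Aᴴ = diagonal (RCLike.ofReal ∘ d) := by
    simpa [conjTranspose_eq_transpose_of_trivial] using h
  obtain ⟨e, he⟩ := exists_perm_of_map_univ_val_eq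
    ((isHermitian_mul_conjTranspose_self A).map_eigenvalues_eq_of_eq_diagonal hAH)
  exact ⟨e, fun i => congrArg Real.sqrt (he i)⟩

theorem mul_transpose_eq_smul_one_of_sv_eq {c : ℝ} (h : ∀ i, sv A i = c) :
    A * Aᵀ = c ^ 2 • 1 := by
  have hev (i : Fin m) : (isHermitian_mul_conjTranspose_self A).eigenvalues i = c ^ 2 := by
    rw [← h i, sv, Real.sq_sqrt ((posSemidef_self_mul_conjTranspose A).eigenvalues_nonneg i)]
  simpa [conjTranspose_eq_transpose_of_trivial] using
    (isHermitian_mul_conjTranspose_self A).eq_smul_one_of_eigenvalues_eq hev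

end

theorem stmt_1_general (m n : ℕ) (P : Matrix (Fin m) (Fin n) Bool) :
    ((∃ A : Matrix (Fin m) (Fin n) ℝ,
        HasPattern A P ∧ ∃ c : ℝ, c ≠ 0 ∧ ∀ i, sv A i = c) ↔
      (∃ Q : Matrix (Fin m) (Fin n) ℝ, HasPattern Q P ∧ Q * Qᵀ = 1)) ∧
    ((∃ Q : Matrix (Fin m) (Fin n) ℝ, HasPattern Q P ∧ Q * Qᵀ = 1) →
      ∀ σ : Fin m → ℝ, (∀ i, 0 < σ i) →
        ∃ A : Matrix (Fin m) (Fin n) ℝ, HasPattern A P ∧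
          ∃ e : Equiv.Perm (Fin m), ∀ i, sv A i = σ (e i)) := by
  refine ⟨⟨?_, ?_⟩, ?_⟩
  · rintro ⟨A, hA, c, hc, hsv⟩
    refine ⟨c⁻¹ • A, hA.smul (inv_ne_zero hc), ?_⟩
    rw [transpose_smul, Matrix.smul_mul, Matrix.mul_smul, smul_smul,
      mul_transpose_eq_smul_one_of_sv_eq hsv, smul_smul, show c⁻¹ * c⁻¹ * c ^ 2 = 1 by field_simp, one_smul]
  · rintro ⟨Q, hQ, hQQ⟩
    refine ⟨Q, hQ, 1, one_ne_zero, fun i => ?_⟩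
    obtain ⟨e, he⟩ := exists_perm_sv_eq_sqrt (d := fun _ => 1) (by rw [hQQ, diagonal_one])
    simpa using he i
  · rintro ⟨Q, hQ, hQQ⟩ σ hσ
    have hAA : (diagonal σ * Q) * (diagonal σ * Q)ᵀ = diagonal (σ ^ 2) := by
      rw [transpose_mul, diagonal_transpose, Matrix.mul_assoc, ← Matrix.mul_assoc Q, hQQ, one_mul,
        diagonal_mul_diagonal, sq]
      rfl
    obtain ⟨e, he⟩ := exists_perm_sv_eq_sqrt hAA
    exact ⟨_, hQ.diagonal_mul fun i => (hσ i).ne', e, fun i => by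
      rw [he i, Pi.pow_apply, Real.sqrt_sq (hσ _).le]⟩

theorem stmt_1 (m n : ℕ) (hmn : m ≤ n) (P : Matrix (Fin m) (Fin n) Bool) :
    ((∃ A : Matrix (Fin m) (Fin n) ℝ,
        HasPattern A P ∧ ∃ c : ℝ, c ≠ 0 ∧ ∀ i, sv A i = c) ↔
      (∃ Q : Matrix (Fin m) (Fin n) ℝ, HasPattern Q P ∧ Q * Qᵀ = 1)) ∧
    ((∃ Q : Matrix (Fin m) (Fin n) ℝ, HasPattern Q P ∧ Q * Qᵀ = 1) →
      ∀ σ : Fin m → ℝ, (∀ i, 0 < σ i) →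
        ∃ A : Matrix (Fin m) (Fin n) ℝ, HasPattern A P ∧
          ∃ e : Equiv.Perm (Fin m), ∀ i, sv A i = σ (e i)) :=
  stmt_1_general m n P
end

section
/- Let A = [B | O] be the m×(n+ℓ) matrix obtained from a nonzero m×n matrix B by appending ℓ > 0 zero columns. Then A has the SSVP if and only if B has the SSVP and the rows of B are linearly independent. -/
/-!
Write X = [Y | Z] in the block form of A = [B | O]. Then X Aᵀ = Y Bᵀ, Aᵀ X is the block matrix
[[Bᵀ Y, Bᵀ Z], [O, O]], and A ∘ X = O only constrains Y. So the SSVP conditions on X split into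
the SSVP conditions on Y for B and the single condition Bᵀ Z = O on Z. Hence A has the SSVP iff
B does and Bᵀ Z = O forces Z = O, which, as Z has at least one column, says that the rows of B
are linearly independent.
-/

open Matrix

/-- The strong singular value property. -/
def HasSSVP {m n : Type*} [Fintype m] [Fintype n] (A : Matrix m n ℝ) : Prop :=
  ∀ X : Matrix m n ℝ,
    (X * Aᵀ).IsSymm → (Aᵀ * X).IsSymm → (∀ i j, A i j ≠ 0 → X i j = 0) → X = 0

namespace Matrix

variable {m n l R : Type*}

theorem linearIndependent_rows_iff_transpose_mul_eq_zero [Fintype m] [Nonempty l] [CommRing R]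
    (B : Matrix m n R) :
    LinearIndependent R B.row ↔ ∀ Z : Matrix m l R, Bᵀ * Z = 0 → Z = 0 := by
  rw [← vecMul_injective_iff, ← coe_vecMulLinear, injective_iff_map_eq_zero]
  constructor
  · intro h Z hZ
    ext i k
    refine congr_fun (h (fun i => Z i k) (funext fun j => ?_)) i
    rw [vecMulLinear_apply, ← mulVec_transpose]
    exact congr_fun₂ hZ j k
  · intro h v hv
    rw [vecMulLinear_apply, ← mulVec_transpose] at hv
    exact (replicateCol_eq_zero (ι := l) v).1
      (h _ (by rw [← replicateCol_mulVec, hv, replicateCol_zero]))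

theorem fromCols_mul_transpose_fromCols_zero [Fintype n] [Fintype l] [Semiring R]
    (B Y : Matrix m n R) (Z : Matrix m l R) :
    fromCols Y Z * (fromCols B (0 : Matrix m l R))ᵀ = Y * Bᵀ := by
  simp [transpose_fromCols, fromCols_mul_fromRows]

theorem isSymm_transpose_fromCols_zero_mul_fromCols_iff [Fintype m] [Semiring R]
    (B Y : Matrix m n R) (Z : Matrix m l R) :
    ((fromCols B (0 : Matrix m l R))ᵀ * fromCols Y Z).IsSymm ↔
      (Bᵀ * Y).IsSymm ∧ Bᵀ * Z = 0 := by
  rw [transpose_fromCols, fromRows_mul_fromCols, isSymm_fromBlocks_iff]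
  simp only [Matrix.zero_mul, transpose_eq_zero, transpose_zero, isSymm_zero, and_true]
  exact and_congr_right fun _ => and_iff_left_of_imp fun h => h.symm

theorem fromCols_zero_support_subset_iff [Zero R] (B Y : Matrix m n R) (Z : Matrix m l R) :
    (∀ i j, fromCols B (0 : Matrix m l R) i j ≠ 0 → fromCols Y Z i j = 0) ↔
      ∀ i j, B i j ≠ 0 → Y i j = 0 := by
  simp [Sum.forall]

end Matrix

theorem hasSSVP_fromCols_zero_iff {m n l : Type*} [Fintype m] [Fintype n] [Fintype l]
    (B : Matrix m n ℝ) :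
    HasSSVP (fromCols B (0 : Matrix m l ℝ)) ↔
      HasSSVP B ∧ ∀ Z : Matrix m l ℝ, Bᵀ * Z = 0 → Z = 0 := by
  constructor
  · intro hA
    refine ⟨fun Y hYB hBY hY => ?_, fun Z hBZ => ?_⟩
    · have h := hA (fromCols Y 0) (by rwa [fromCols_mul_transpose_fromCols_zero])
        ((isSymm_transpose_fromCols_zero_mul_fromCols_iff ..).2 ⟨hBY, Matrix.mul_zero _⟩)
        ((fromCols_zero_support_subset_iff ..).2 hY)
      rw [← fromCols_zero] at h
      exact (fromCols_inj h).1
    · have h := hA (fromCols 0 Z)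
        (by simp [fromCols_mul_transpose_fromCols_zero])
        ((isSymm_transpose_fromCols_zero_mul_fromCols_iff ..).2 ⟨by simp, hBZ⟩)
        ((fromCols_zero_support_subset_iff ..).2 fun _ _ _ => rfl)
      rw [← fromCols_zero] at h
      exact (fromCols_inj h).2
  · rintro ⟨hB, hB_inj⟩ X hXB hBX hX
    rw [← fromCols_toCols X] at hXB hBX hX ⊢
    rw [fromCols_mul_transpose_fromCols_zero] at hXB
    obtain ⟨hBX₁, hBX₂⟩ := (isSymm_transpose_fromCols_zero_mul_fromCols_iff ..).1 hBX
    rw [hB _ hXB hBX₁ ((fromCols_zero_support_subset_iff ..).1 hX), hB_inj _ hBX₂,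
      fromCols_zero]

theorem stmt_13_general (m n l : ℕ) (hl : 0 < l) (B : Matrix (Fin m) (Fin n) ℝ) :
    HasSSVP (Matrix.fromCols B (0 : Matrix (Fin m) (Fin l) ℝ)) ↔
      HasSSVP B ∧ LinearIndependent ℝ (fun i => B i) := by
  have : Nonempty (Fin l) := Fin.pos_iff_nonempty.1 hl
  exact (hasSSVP_fromCols_zero_iff B).trans
    (and_congr_right fun _ => (linearIndependent_rows_iff_transpose_mul_eq_zero B).symm)

theorem stmt_13 (m n l : ℕ) (hl : 0 < l) (B : Matrix (Fin m) (Fin n) ℝ) (hB : B ≠ 0) :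
    HasSSVP (Matrix.fromCols B (0 : Matrix (Fin m) (Fin l) ℝ)) ↔
      HasSSVP B ∧ LinearIndependent ℝ (fun i => B i) :=
  stmt_13_general m n l hl B
end

section
/- Let A be the 2×(n₂+n₃) matrix A = [[cᵀ, 0ᵀ],[0ᵀ, dᵀ]] where c ∈ ℝ^{n₂} and d ∈ ℝ^{n₃} are nowhere-zero vectors and n₂, n₃ > 0. Then A has the SSVP if and only if dᵀd ≠ cᵀc. -/
open Matrix

theorem stmt_14 (n₂ n₃ : ℕ) (h₂ : 0 < n₂) (h₃ : 0 < n₃)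
    (c : Fin n₂ → ℝ) (d : Fin n₃ → ℝ) (hc : ∀ i, c i ≠ 0) (hd : ∀ i, d i ≠ 0) :
    HasSSVP (Matrix.of fun (i : Fin 2) (j : Fin n₂ ⊕ Fin n₃) =>
        if i = 0 then Sum.elim c (fun _ => (0 : ℝ)) j
        else Sum.elim (fun _ => (0 : ℝ)) d j) ↔
      (∑ i, d i * d i) ≠ (∑ i, c i * c i) := by
  set A : Matrix (Fin 2) (Fin n₂ ⊕ Fin n₃) ℝ :=
    Matrix.of fun (i : Fin 2) (j : Fin n₂ ⊕ Fin n₃) =>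
        if i = 0 then Sum.elim c (fun _ => (0 : ℝ)) j
        else Sum.elim (fun _ => (0 : ℝ)) d j with hA
  have hA0l : ∀ j, A 0 (Sum.inl j) = c j := by intro j; simp [hA]
  have hA0r : ∀ k, A 0 (Sum.inr k) = 0 := by intro k; simp [hA]
  have hA1l : ∀ j, A 1 (Sum.inl j) = 0 := by intro j; simp [hA]
  have hA1r : ∀ k, A 1 (Sum.inr k) = d k := by intro k; simp [hA]
  constructor
  · intro hS heq
    set X : Matrix (Fin 2) (Fin n₂ ⊕ Fin n₃) ℝ :=
      Matrix.of fun i j => if i = 0 then Sum.elim (fun _ => (0:ℝ)) d j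
        else Sum.elim c (fun _ => (0:ℝ)) j with hX
    have hX0l : ∀ j, X 0 (Sum.inl j) = 0 := by intro j; simp [hX]
    have hX0r : ∀ k, X 0 (Sum.inr k) = d k := by intro k; simp [hX]
    have hX1l : ∀ j, X 1 (Sum.inl j) = c j := by intro j; simp [hX]
    have hX1r : ∀ k, X 1 (Sum.inr k) = 0 := by intro k; simp [hX]
    have h1 : (X * Aᵀ).IsSymm := by
      rw [Matrix.IsSymm]
      ext i j
      rw [Matrix.transpose_apply]
      fin_cases i <;> fin_cases j <;>
        simp [Matrix.mul_apply, Fintype.sum_sum_type, hA0l, hA0r, hA1l, hA1r,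
          hX0l, hX0r, hX1l, hX1r, heq]
    have h2 : (Aᵀ * X).IsSymm := by
      rw [Matrix.IsSymm]
      ext j k
      rw [Matrix.transpose_apply]
      cases j <;> cases k <;>
        simp [Matrix.mul_apply, Fin.sum_univ_two, hA0l, hA0r, hA1l, hA1r,
          hX0l, hX0r, hX1l, hX1r, mul_comm]
    have h3 : ∀ i j, A i j ≠ 0 → X i j = 0 := by
      intro i j hij
      fin_cases i <;> cases j <;>
        simp_all [hA0l, hA0r, hA1l, hA1r, hX0l, hX0r, hX1l, hX1r]
    have hz := hS X h1 h2 h3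
    have := congrFun (congrFun hz 1) (Sum.inl ⟨0, h₂⟩)
    rw [hX1l] at this
    exact hc _ (by simpa using this)
  · intro hne X hXA hAX hH
    have hx0 : ∀ j, X 0 (Sum.inl j) = 0 := fun j => hH 0 _ (by rw [hA0l]; exact hc j)
    have hy1 : ∀ k, X 1 (Sum.inr k) = 0 := fun k => hH 1 _ (by rw [hA1r]; exact hd k)
    set x : Fin n₂ → ℝ := fun j => X 1 (Sum.inl j) with hxdef
    set y : Fin n₃ → ℝ := fun k => X 0 (Sum.inr k) with hydef
    have key : ∀ j k, c j * y k = d k * x j := by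
      intro j k
      have h := hAX.apply (Sum.inl j) (Sum.inr k)
      simpa [Matrix.mul_apply, Fin.sum_univ_two, hA0l, hA0r, hA1l, hA1r,
        hx0, hy1, hxdef, hydef] using h.symm
    set j₀ : Fin n₂ := ⟨0, h₂⟩
    set k₀ : Fin n₃ := ⟨0, h₃⟩
    set t : ℝ := y k₀ / d k₀ with ht
    have hx : ∀ j, x j = t * c j := by
      intro j
      have h := key j k₀
      rw [ht, div_mul_eq_mul_div, eq_div_iff (hd k₀)]
      linarith
    have hy : ∀ k, y k = t * d k := by
      intro k
      have h := key j₀ k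
      rw [hx j₀] at h
      exact mul_left_cancel₀ (hc j₀) (h.trans (by ring))
    have hsum : t * ∑ i, c i * c i = t * ∑ i, d i * d i := by
      have h := hXA.apply 0 1
      simp only [Matrix.mul_apply, Fintype.sum_sum_type, Matrix.transpose_apply,
        hA0l, hA0r, hA1l, hA1r] at h
      simp only [hx0, hy1, zero_mul, mul_zero, Finset.sum_const_zero, add_zero,
        zero_add] at h
      calc t * ∑ i, c i * c i = ∑ i, x i * c i := by
            rw [Finset.mul_sum]; congr 1; ext i; rw [hx]; ring
        _ = ∑ i, y i * d i := h
        _ = t * ∑ i, d i * d i := by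
            rw [Finset.mul_sum]; congr 1; ext i; rw [hy]; ring
    have ht0 : t = 0 := by
      by_contra h
      exact hne (mul_left_cancel₀ h hsum).symm
    ext i j
    fin_cases i <;> rcases j with j | k
    · simpa using hx0 j
    · show X 0 (Sum.inr k) = 0
      have h := hy k
      rw [ht0, zero_mul] at h
      exact h
    · show X 1 (Sum.inl j) = 0
      have h := hx j
      rw [ht0, zero_mul] at h
      exact h
    · simpa using hy1 k
end

section
/- A real n×n diagonal matrix D = diag(d₁,…,d_n) has the SSVP if and only if all d_i are nonzero and |d_i| ≠ |d_j| for all i ≠ j. -/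
/-!
For diagonal `D = diag d` the three defining conditions of the SSVP decouple entrywise:
`X i i = 0` whenever `d i ≠ 0`, and for `i ≠ j` both `X j i * d i = X i j * d j` and
`d j * X j i = d i * X i j`, which together force `X i j * (d i ^ 2 - d j ^ 2) = 0`.
Conversely, a zero `d i` or a pair with `d j = ± d i` yields a nonzero witness supported on
the entries indexed by `i` and `j`.
-/

open Matrix

section Diagonal

variable {m : Type*} [Fintype m] [DecidableEq m]

theorem hasSSVP_diagonal_iff (d : m → ℝ) :
    HasSSVP (diagonal d) ↔ ∀ X : Matrix m m ℝ,
      (∀ i j, X j i * d i = X i j * d j) → (∀ i j, d j * X j i = d i * X i j) →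
        (∀ i, d i ≠ 0 → X i i = 0) → X = 0 := by
  have hsupp (X : Matrix m m ℝ) :
      (∀ i j, diagonal d i j ≠ 0 → X i j = 0) ↔ ∀ i, d i ≠ 0 → X i i = 0 := by
    refine ⟨fun h i hi => h i i (by simpa using hi), fun h i j hij => ?_⟩
    obtain rfl : i = j := by_contra fun hne => hij (diagonal_apply_ne d hne)
    exact h i (by simpa using hij)
  simp only [HasSSVP, IsSymm.ext_iff, diagonal_transpose, mul_diagonal, diagonal_mul, hsupp]

theorem eq_zero_of_mul_eq_of_mul_eq {a b x y : ℝ} (h₁ : y * a = x * b) (h₂ : b * y = a * x)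
    (hab : |a| ≠ |b|) : x = 0 := by
  have : x * (a ^ 2 - b ^ 2) = 0 := by linear_combination b * h₁ - a * h₂
  refine (mul_eq_zero.mp this).resolve_right fun h => hab ?_
  exact sq_eq_sq_iff_abs_eq_abs a b |>.mp (sub_eq_zero.mp h)

theorem hasSSVP_diagonal {d : m → ℝ} (hd : ∀ i, d i ≠ 0)
    (habs : ∀ i j, i ≠ j → |d i| ≠ |d j|) : HasSSVP (diagonal d) := by
  rw [hasSSVP_diagonal_iff]
  intro X h₁ h₂ hdiag
  ext i j
  rcases eq_or_ne i j with rfl | hij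
  · exact hdiag i (hd i)
  · exact eq_zero_of_mul_eq_of_mul_eq (h₁ i j) (h₂ i j) (habs i j hij)

theorem HasSSVP.diagonal_ne_zero {d : m → ℝ} (h : HasSSVP (diagonal d)) (i : m) : d i ≠ 0 := by
  intro hi
  rw [hasSSVP_diagonal_iff] at h
  have := congrFun₂ (h (single i i 1) ?_ ?_ ?_) i i
  · simp at this
  all_goals intros; grind

theorem HasSSVP.abs_diagonal_ne {d : m → ℝ} (h : HasSSVP (diagonal d)) {i j : m} (hij : i ≠ j) :
    |d i| ≠ |d j| := by
  intro habs
  obtain ⟨c, hc₁, hc₂⟩ : ∃ c : ℝ, d j = c * d i ∧ d i = c * d j := by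
    rcases abs_eq_abs.mp habs with h | h
    · exact ⟨1, by simp [h], by simp [h]⟩
    · exact ⟨-1, by simp [h], by simp [h]⟩
  rw [hasSSVP_diagonal_iff] at h
  have := congrFun₂ (h (single i j 1 + single j i c) ?_ ?_ ?_) i j
  · simp [hij] at this
  all_goals intros; grind [Matrix.add_apply]

end Diagonal

theorem stmt_15 (n : ℕ) (d : Fin n → ℝ) :
    HasSSVP (Matrix.diagonal d) ↔
      (∀ i, d i ≠ 0) ∧ ∀ i j, i ≠ j → |d i| ≠ |d j| :=
  ⟨fun h => ⟨h.diagonal_ne_zero, fun _ _ => h.abs_diagonal_ne⟩,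
    fun ⟨hd, habs⟩ => hasSSVP_diagonal hd habs⟩
end

section
/- If an m×n real matrix A has the SSVP, then A has term-rank min{m,n}; equivalently (for m ≤ n), A has no r×s zero submatrix with r + s = n + 1. -/
open Matrix

lemma exists_ne_zero_mulVec_eq_zero {α β : Type*} [Fintype α] [Fintype β]
    (M : Matrix α β ℝ) (h : Fintype.card α < Fintype.card β) :
    ∃ v : β → ℝ, v ≠ 0 ∧ M.mulVec v = 0 := by
  by_contra hc
  push_neg at hc
  have hinj : Function.Injective M.mulVecLin := by
    rw [← LinearMap.ker_eq_bot, LinearMap.ker_eq_bot']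
    intro v hv
    by_contra hv0
    exact hc v hv0 hv
  have hle := LinearMap.finrank_le_finrank_of_injective hinj
  rw [Module.finrank_fintype_fun_eq_card, Module.finrank_fintype_fun_eq_card] at hle
  omega

theorem stmt_16 (m n : ℕ) (hmn : m ≤ n) (A : Matrix (Fin m) (Fin n) ℝ)
    (hA : HasSSVP A) :
    ∀ (R : Finset (Fin m)) (S : Finset (Fin n)), R.Nonempty → S.Nonempty →
      R.card + S.card = n + 1 → ∃ i ∈ R, ∃ j ∈ S, A i j ≠ 0 := by
  intro R S hR hS hcard
  by_contra hcon
  push_neg at hcon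
  -- cardinalities
  have hRm : R.card ≤ m := by simpa using R.card_le_card (Finset.subset_univ R)
  have hSn : S.card ≤ n := by simpa using S.card_le_card (Finset.subset_univ S)
  have hR1 : 1 ≤ R.card := hR.card_pos
  have hS1 : 1 ≤ S.card := hS.card_pos
  -- find u₀ supported on R
  obtain ⟨u₀, hu₀ne, hu₀⟩ :=
    exists_ne_zero_mulVec_eq_zero
      (Matrix.of fun (j : ↥(Sᶜ)) (i : ↥R) => A i j)
      (by simp only [Fintype.card_coe, Finset.card_compl, Fintype.card_fin]; omega)
  -- find v₀ supported on S
  obtain ⟨v₀, hv₀ne, hv₀⟩ :=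
    exists_ne_zero_mulVec_eq_zero
      (Matrix.of fun (i : ↥(Rᶜ)) (j : ↥S) => A i j)
      (by simp only [Fintype.card_coe, Finset.card_compl, Fintype.card_fin]; omega)
  set u : Fin m → ℝ := fun i => if h : i ∈ R then u₀ ⟨i, h⟩ else 0 with hu_def
  set v : Fin n → ℝ := fun j => if h : j ∈ S then v₀ ⟨j, h⟩ else 0 with hv_def
  set X : Matrix (Fin m) (Fin n) ℝ := Matrix.of fun i j => u i * v j with hX_def
  -- key sums
  have hsumv : ∀ k : Fin m, ∑ j, A k j * v j = 0 := by
    intro k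
    have h1 : ∑ j, A k j * v j = ∑ j ∈ S, A k j * v j := by
      refine (Finset.sum_subset S.subset_univ ?_).symm
      intro j _ hj
      simp [hv_def, hj]
    rw [h1]
    have h2 : ∑ j ∈ S, A k j * v j = ∑ j ∈ S.attach, A k j * v₀ j := by
      rw [← Finset.sum_attach S (fun j => A k j * v j)]
      refine Finset.sum_congr rfl fun j _ => ?_
      simp [hv_def, j.2]
    rw [h2]
    by_cases hk : k ∈ R
    · refine Finset.sum_eq_zero fun j _ => ?_
      rw [hcon k hk j j.2, zero_mul]
    · have := congrFun hv₀ ⟨k, Finset.mem_compl.2 hk⟩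
      simpa [Matrix.mulVec, dotProduct, Finset.sum_attach] using this
  have hsumu : ∀ l : Fin n, ∑ i, A i l * u i = 0 := by
    intro l
    have h1 : ∑ i, A i l * u i = ∑ i ∈ R, A i l * u i := by
      refine (Finset.sum_subset R.subset_univ ?_).symm
      intro i _ hi
      simp [hu_def, hi]
    rw [h1]
    have h2 : ∑ i ∈ R, A i l * u i = ∑ i ∈ R.attach, A i l * u₀ i := by
      rw [← Finset.sum_attach R (fun i => A i l * u i)]
      refine Finset.sum_congr rfl fun i _ => ?_
      simp [hu_def, i.2]
    rw [h2]
    by_cases hl : l ∈ S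
    · refine Finset.sum_eq_zero fun i _ => ?_
      rw [hcon i i.2 l hl, zero_mul]
    · have := congrFun hu₀ ⟨l, Finset.mem_compl.2 hl⟩
      simpa [Matrix.mulVec, dotProduct, Finset.sum_attach] using this
  -- X * Aᵀ = 0
  have hXA : X * Aᵀ = 0 := by
    ext i k
    simp only [Matrix.mul_apply, Matrix.transpose_apply, Matrix.zero_apply, hX_def,
      Matrix.of_apply]
    calc ∑ j, u i * v j * A k j = u i * ∑ j, A k j * v j := by
          rw [Finset.mul_sum]; exact Finset.sum_congr rfl fun j _ => by ring
      _ = 0 := by rw [hsumv k, mul_zero]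
  have hAX : Aᵀ * X = 0 := by
    ext j l
    simp only [Matrix.mul_apply, Matrix.transpose_apply, Matrix.zero_apply, hX_def,
      Matrix.of_apply]
    calc ∑ i, A i j * (u i * v l) = (∑ i, A i j * u i) * v l := by
          rw [Finset.sum_mul]; exact Finset.sum_congr rfl fun i _ => by ring
      _ = 0 := by rw [hsumu j, zero_mul]
  have hsupp : ∀ i j, A i j ≠ 0 → X i j = 0 := by
    intro i j hij
    by_cases hi : i ∈ R
    · by_cases hj : j ∈ S
      · exact absurd (hcon i hi j hj) hij
      · simp [hX_def, hv_def, hj]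
    · simp [hX_def, hu_def, hi]
  have hX0 : X = 0 := hA X (by rw [hXA]; simp [Matrix.IsSymm]) (by rw [hAX]; simp [Matrix.IsSymm]) hsupp
  obtain ⟨i₀, hi₀⟩ := Function.ne_iff.1 hu₀ne
  obtain ⟨j₀, hj₀⟩ := Function.ne_iff.1 hv₀ne
  have : X i₀ j₀ = u₀ i₀ * v₀ j₀ := by
    simp [hX_def, hu_def, hv_def, i₀.2, j₀.2]
  rw [hX0] at this
  exact (mul_ne_zero hi₀ hj₀) this.symm
end

section
/- Let A be m×n and B be p×q real matrices with m+p ≤ n+q, and let M = A ⊕ B (block diagonal direct sum). Then M has the SSVP if and only if: (a) m ≤ n and p ≤ q; (b) both A and B have the SSVP; (c) A and B share no common nonzero singular value; and (d) either both A and B have linearly independent rows, or one of A and B is square and invertible. -/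
/-!
Write `X = [[P, Y], [Z, Q]]`. Since `M = A ⊕ B` vanishes off its diagonal blocks, the SSVP
conditions on `X` split into the SSVP conditions for `(P, A)` and `(Q, B)` and the coupled
equations `B Yᵀ = Z Aᵀ`, `Yᵀ A = Bᵀ Z`, on which the Hadamard condition imposes nothing. These
give `Yᵀ (A Aᵀ) = (Bᵀ B) Yᵀ`, so `Yᵀ` maps eigenvectors of `A Aᵀ` to eigenvectors of `Bᵀ B` with
the same eigenvalue. As the nonzero eigenvalues of `Bᵀ B` are those of `B Bᵀ`, `Y` is forced to
vanish as soon as `A Aᵀ` and `B Bᵀ` share no nonzero eigenvalue and `ker Aᵀ = 0` or `ker B = 0`;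
symmetrically for `Z`. Conversely, rank-one solutions `(u vᵀ, w xᵀ)` built from kernel vectors or
from common eigenvectors show that these conditions are necessary. Given `m + p ≤ n + q`, the
kernel conditions `(ker Aᵀ = 0 ∨ ker B = 0) ∧ (ker Bᵀ = 0 ∨ ker A = 0)` are, by rank arithmetic,
equivalent to (a) and (d).
-/

open Matrix

namespace Matrix

section Rank

variable {K m n : Type*} [Field K] [Fintype m] [Fintype n] (A : Matrix m n K)

theorem linearIndependent_row_iff_rank_eq :
    LinearIndependent K A.row ↔ A.rank = Fintype.card m := by
  rw [rank_eq_finrank_span_row, linearIndependent_iff_card_eq_finrank_span, Set.finrank, eq_comm]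

theorem mulVec_injective_iff_rank_eq :
    Function.Injective A.mulVec ↔ A.rank = Fintype.card n := by
  rw [mulVec_injective_iff, ← row_transpose, linearIndependent_row_iff_rank_eq, rank_transpose]

end Rank

theorem exists_mulVec_eq_zero_of_not_injective {K m n : Type*} [Field K] [Fintype n]
    {A : Matrix m n K} (h : ¬ Function.Injective A.mulVec) : ∃ v ≠ 0, A *ᵥ v = 0 := by
  rw [← coe_mulVecLin, injective_iff_map_eq_zero] at h
  push Not at h
  simpa only [and_comm, mulVecLin_apply] using h

theorem vecMulVec_eq_zero_iff {R m n : Type*} [MulZeroClass R] [NoZeroDivisors R]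
    {u : m → R} {v : n → R} : vecMulVec u v = 0 ↔ u = 0 ∨ v = 0 := by
  simp only [← ext_iff, vecMulVec_apply, zero_apply, mul_eq_zero, funext_iff, Pi.zero_apply,
    forall_or_left, forall_or_right]

theorem mem_spectrum_iff_exists_mulVec_eq_smul {K n : Type*} [Field K] [Fintype n]
    [DecidableEq n] {S : Matrix n n K} {μ : K} :
    μ ∈ spectrum K S ↔ ∃ v ≠ 0, S *ᵥ v = μ • v := by
  rw [← spectrum_toLin', ← Module.End.hasEigenvalue_iff_mem_spectrum,
    Module.End.hasEigenvalue_iff, Submodule.ne_bot_iff]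
  simp [and_comm]

section LinearOrderedField

variable {K m n : Type*} [Field K] [LinearOrder K] [IsStrictOrderedRing K] [Fintype m] [Fintype n]

theorem transpose_mul_self_mulVec_eq_zero_iff (A : Matrix m n K) (v : n → K) :
    (Aᵀ * A) *ᵥ v = 0 ↔ A *ᵥ v = 0 :=
  Iff.of_eq (congrArg (v ∈ ·) (ker_mulVecLin_transpose_mul_self A))

theorem zero_notMem_spectrum_mul_transpose [DecidableEq m] {A : Matrix m n K}
    (hA : Function.Injective Aᵀ.mulVec) : (0 : K) ∉ spectrum K (A * Aᵀ) := by
  rw [mem_spectrum_iff_exists_mulVec_eq_smul]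
  rintro ⟨u, hu, hAu⟩
  have := (transpose_mul_self_mulVec_eq_zero_iff Aᵀ u).mp (by simpa using hAu)
  exact hu (hA (this.trans (mulVec_zero Aᵀ).symm))

end LinearOrderedField

theorem IsHermitian.eq_zero_of_mul_eq_mul {𝕜 m p : Type*} [RCLike 𝕜] [Fintype m]
    [DecidableEq m] [Fintype p] {S : Matrix m m 𝕜} (hS : S.IsHermitian) {T : Matrix p p 𝕜}
    {X : Matrix p m 𝕜} (hX : X * S = T * X)
    (hT : ∀ k v, T *ᵥ v = hS.eigenvalues k • v → v = 0) : X = 0 := by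
  have hb : ∀ k, X *ᵥ ⇑(hS.eigenvectorBasis k) = 0 := fun k => hT k _ <| by
    rw [mulVec_mulVec, ← hX, ← mulVec_mulVec, hS.mulVec_eigenvectorBasis, mulVec_smul]
  have : toEuclideanLin X = 0 := hS.eigenvectorBasis.toBasis.ext fun k => by
    rw [OrthonormalBasis.coe_toBasis, toLpLin_apply, hb k, LinearMap.zero_apply,
      WithLp.toLp_zero]
  exact toEuclideanLin.map_eq_zero_iff.mp this

end Matrix

section Blocks

variable {R m n p q : Type*} (A : Matrix m n R) (B : Matrix p q R)
  (P : Matrix m n R) (Y : Matrix m q R) (Z : Matrix p n R) (Q : Matrix p q R)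

section Zero

variable [Zero R]

theorem support_fromBlocks_iff :
    (∀ i j, fromBlocks A 0 0 B i j ≠ 0 → fromBlocks P Y Z Q i j = 0) ↔
      (∀ i j, A i j ≠ 0 → P i j = 0) ∧ (∀ i j, B i j ≠ 0 → Q i j = 0) := by
  simp [Sum.forall]

theorem fromBlocks_eq_zero_iff : fromBlocks P Y Z Q = 0 ↔ P = 0 ∧ Y = 0 ∧ Z = 0 ∧ Q = 0 := by
  rw [← fromBlocks_zero, fromBlocks_inj]

end Zero

variable [CommSemiring R] [Fintype m] [Fintype n] [Fintype p] [Fintype q]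

theorem isSymm_fromBlocks_mul_transpose_iff :
    (fromBlocks P Y Z Q * (fromBlocks A 0 0 B)ᵀ).IsSymm ↔
      (P * Aᵀ).IsSymm ∧ (Q * Bᵀ).IsSymm ∧ B * Yᵀ = Z * Aᵀ := by
  have : A * Zᵀ = Y * Bᵀ ↔ B * Yᵀ = Z * Aᵀ := by
    rw [← transpose_inj, eq_comm]; simp [transpose_mul]
  simp only [fromBlocks_transpose, transpose_zero, fromBlocks_multiply, Matrix.mul_zero, add_zero,
    zero_add, isSymm_fromBlocks_iff, transpose_mul, transpose_transpose, this]
  tauto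

theorem isSymm_transpose_fromBlocks_mul_iff :
    ((fromBlocks A 0 0 B)ᵀ * fromBlocks P Y Z Q).IsSymm ↔
      (Aᵀ * P).IsSymm ∧ (Bᵀ * Q).IsSymm ∧ Yᵀ * A = Bᵀ * Z := by
  have : Zᵀ * B = Aᵀ * Y ↔ Yᵀ * A = Bᵀ * Z := by
    rw [← transpose_inj, eq_comm]; simp [transpose_mul]
  simp only [fromBlocks_transpose, transpose_zero, fromBlocks_multiply, Matrix.zero_mul, add_zero,
    zero_add, isSymm_fromBlocks_iff, transpose_mul, transpose_transpose, this]
  tauto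

end Blocks

/-- The conditions that the SSVP of `fromBlocks A 0 0 B` imposes on the off-diagonal blocks
`Y`, `Z` of `X = fromBlocks P Y Z Q`. -/
def OffDiagSSVP {m n p q : Type*} [Fintype m] [Fintype n] [Fintype p] [Fintype q]
    (A : Matrix m n ℝ) (B : Matrix p q ℝ) : Prop :=
  ∀ (Y : Matrix m q ℝ) (Z : Matrix p n ℝ), B * Yᵀ = Z * Aᵀ → Yᵀ * A = Bᵀ * Z → Y = 0 ∧ Z = 0

section OffDiag

variable {m n p q : Type*} [Fintype m] [Fintype n] [Fintype p] [Fintype q]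
  {A : Matrix m n ℝ} {B : Matrix p q ℝ}

theorem hasSSVP_fromBlocks_iff :
    HasSSVP (fromBlocks A 0 0 B) ↔ HasSSVP A ∧ HasSSVP B ∧ OffDiagSSVP A B := by
  have hX : HasSSVP (fromBlocks A 0 0 B) ↔ ∀ (P : Matrix m n ℝ) (Y : Matrix m q ℝ)
      (Z : Matrix p n ℝ) (Q : Matrix p q ℝ),
      (fromBlocks P Y Z Q * (fromBlocks A 0 0 B)ᵀ).IsSymm →
      ((fromBlocks A 0 0 B)ᵀ * fromBlocks P Y Z Q).IsSymm →
      (∀ i j, fromBlocks A 0 0 B i j ≠ 0 → fromBlocks P Y Z Q i j = 0) →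
      fromBlocks P Y Z Q = 0 :=
    ⟨fun h P Y Z Q => h _, fun h X => fromBlocks_toBlocks X ▸ h _ _ _ _⟩
  simp only [hX, isSymm_fromBlocks_mul_transpose_iff, isSymm_transpose_fromBlocks_mul_iff,
    support_fromBlocks_iff, fromBlocks_eq_zero_iff]
  constructor
  · intro h
    refine ⟨fun P h₁ h₂ h₃ => ?_, fun Q h₁ h₂ h₃ => ?_, fun Y Z e₁ e₂ => ?_⟩
    · exact (h P 0 0 0 ⟨h₁, by simp [IsSymm]⟩ ⟨h₂, by simp [IsSymm]⟩ ⟨h₃, by simp⟩).1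
    · exact (h 0 0 0 Q ⟨by simp [IsSymm], h₁, by simp⟩ ⟨by simp [IsSymm], h₂, by simp⟩
        ⟨by simp, h₃⟩).2.2.2
    · obtain ⟨-, hY, hZ, -⟩ := h 0 Y Z 0 ⟨by simp [IsSymm], by simp [IsSymm], e₁⟩
        ⟨by simp [IsSymm], by simp [IsSymm], e₂⟩ ⟨by simp, by simp⟩
      exact ⟨hY, hZ⟩
  · rintro ⟨hA, hB, hAB⟩ P Y Z Q ⟨hPA, hQB, e₁⟩ ⟨hAP, hBQ, e₂⟩ ⟨hP, hQ⟩
    exact ⟨hA P hPA hAP hP, (hAB Y Z e₁ e₂).1, (hAB Y Z e₁ e₂).2, hB Q hQB hBQ hQ⟩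

theorem offDiag_equations_comm {Y : Matrix m q ℝ} {Z : Matrix p n ℝ} :
    (B * Yᵀ = Z * Aᵀ ∧ Yᵀ * A = Bᵀ * Z) ↔ (A * Zᵀ = Y * Bᵀ ∧ Zᵀ * B = Aᵀ * Y) := by
  rw [← transpose_inj (A := A * Zᵀ), ← transpose_inj (A := Zᵀ * B)]
  simp only [transpose_mul, transpose_transpose]
  constructor <;> exact fun ⟨e₁, e₂⟩ => ⟨e₁.symm, e₂.symm⟩

theorem OffDiagSSVP.symm (h : OffDiagSSVP A B) : OffDiagSSVP B A := fun Z Y e₁ e₂ =>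
  have e := offDiag_equations_comm.mpr ⟨e₁, e₂⟩
  (h Y Z e.1 e.2).symm

theorem OffDiagSSVP.vecMulVec_eq_zero (h : OffDiagSSVP A B) {u : m → ℝ} {v : q → ℝ}
    {w : p → ℝ} {x : n → ℝ} (h₁ : vecMulVec (B *ᵥ v) u = vecMulVec w (A *ᵥ x))
    (h₂ : vecMulVec v (Aᵀ *ᵥ u) = vecMulVec (Bᵀ *ᵥ w) x) :
    vecMulVec u v = 0 ∧ vecMulVec w x = 0 :=
  h _ _ (by rw [transpose_vecMulVec, mul_vecMulVec, h₁, vecMulVec_mul, vecMul_transpose])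
    (by rw [transpose_vecMulVec, vecMulVec_mul, ← mulVec_transpose, h₂, mul_vecMulVec])

theorem OffDiagSSVP.injective_or_injective (h : OffDiagSSVP A B) :
    Function.Injective Aᵀ.mulVec ∨ Function.Injective B.mulVec := by
  by_contra! hK
  obtain ⟨u, hu, hAu⟩ := exists_mulVec_eq_zero_of_not_injective hK.1
  obtain ⟨v, hv, hBv⟩ := exists_mulVec_eq_zero_of_not_injective hK.2
  have := (h.vecMulVec_eq_zero (u := u) (v := v) (w := 0) (x := 0)
    (by rw [hBv, mulVec_zero, zero_vecMulVec, zero_vecMulVec])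
    (by ext; simp [vecMulVec_apply, hAu])).1
  exact (vecMulVec_eq_zero_iff.mp this).elim hu hv

variable [DecidableEq m] [DecidableEq p]

theorem OffDiagSSVP.eq_zero_of_mem_spectrum (h : OffDiagSSVP A B) {μ : ℝ}
    (hA : μ ∈ spectrum ℝ (A * Aᵀ)) (hB : μ ∈ spectrum ℝ (B * Bᵀ)) : μ = 0 := by
  by_contra hμ
  obtain ⟨u, hu, hAu⟩ := mem_spectrum_iff_exists_mulVec_eq_smul.mp hA
  obtain ⟨w, hw, hBw⟩ := mem_spectrum_iff_exists_mulVec_eq_smul.mp hB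
  have hBw' : Bᵀ *ᵥ w ≠ 0 := fun h0 => hw <| (smul_eq_zero.mp <| by
    rw [← hBw, ← mulVec_mulVec, h0, mulVec_zero]).resolve_left hμ
  -- both sides of the first equation are `μ • vecMulVec w u`
  have := (h.vecMulVec_eq_zero (v := Bᵀ *ᵥ w) (x := Aᵀ *ᵥ u) (by
    rw [mulVec_mulVec, mulVec_mulVec, hBw, hAu, smul_vecMulVec, vecMulVec_smul]) rfl).1
  exact (vecMulVec_eq_zero_iff.mp this).elim hu hBw'

theorem eq_zero_of_offDiag_equations
    (hK : Function.Injective Aᵀ.mulVec ∨ Function.Injective B.mulVec)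
    (hC : ∀ μ ∈ spectrum ℝ (A * Aᵀ), μ ∈ spectrum ℝ (B * Bᵀ) → μ = 0)
    {Y : Matrix m q ℝ} {Z : Matrix p n ℝ} (e₁ : B * Yᵀ = Z * Aᵀ) (e₂ : Yᵀ * A = Bᵀ * Z) :
    Y = 0 := by
  have hS : (A * Aᵀ).IsHermitian := by simpa using isHermitian_mul_conjTranspose_self A
  rw [← transpose_eq_zero]
  refine hS.eq_zero_of_mul_eq_mul (T := Bᵀ * B) ?_ fun k v hv => ?_
  · rw [← Matrix.mul_assoc, e₂, Matrix.mul_assoc, ← e₁, Matrix.mul_assoc]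
  have hμ := hS.eigenvalues_mem_spectrum_real k
  by_cases h0 : hS.eigenvalues k = 0
  · rw [h0, zero_smul, transpose_mul_self_mulVec_eq_zero_iff, ← mulVec_zero B] at hv
    rcases hK with hA | hB
    · exact absurd (h0 ▸ hμ) (zero_notMem_spectrum_mul_transpose hA)
    · exact hB hv
  -- for `μ ≠ 0`, an eigenvector `v` of `Bᵀ B` yields the eigenvector `B v` of `B Bᵀ`
  by_contra hv0
  have hBv : B *ᵥ v ≠ 0 := fun hBv => hv0 <| (smul_eq_zero.mp <| by
    rw [← hv, ← mulVec_mulVec, hBv, mulVec_zero]).resolve_left h0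
  refine h0 (hC _ hμ (mem_spectrum_iff_exists_mulVec_eq_smul.mpr ⟨B *ᵥ v, hBv, ?_⟩))
  rw [mulVec_mulVec, Matrix.mul_assoc, ← mulVec_mulVec, hv, mulVec_smul]

theorem offDiagSSVP_iff : OffDiagSSVP A B ↔
    ((Function.Injective Aᵀ.mulVec ∨ Function.Injective B.mulVec) ∧
      (Function.Injective Bᵀ.mulVec ∨ Function.Injective A.mulVec)) ∧
      ∀ μ ∈ spectrum ℝ (A * Aᵀ), μ ∈ spectrum ℝ (B * Bᵀ) → μ = 0 := by
  refine ⟨fun h => ⟨⟨h.injective_or_injective, h.symm.injective_or_injective⟩,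
    fun μ => h.eq_zero_of_mem_spectrum⟩, fun ⟨⟨hK₁, hK₂⟩, hC⟩ Y Z e₁ e₂ => ?_⟩
  have e := offDiag_equations_comm.mp ⟨e₁, e₂⟩
  exact ⟨eq_zero_of_offDiag_equations hK₁ hC e₁ e₂,
    eq_zero_of_offDiag_equations hK₂ (fun μ hB hA => hC μ hA hB) e.1 e.2⟩

end OffDiag

section Fin

variable {m n p q : ℕ}

theorem spectrum_mul_transpose_eq_range_sq_sv (A : Matrix (Fin m) (Fin n) ℝ) :
    spectrum ℝ (A * Aᵀ) = Set.range fun i => sv A i ^ 2 := by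
  have hA := isHermitian_mul_conjTranspose_self A
  rw [show A * Aᵀ = A * Aᴴ by simp, hA.spectrum_real_eq_range_eigenvalues]
  congr 1; funext i
  exact (Real.sq_sqrt (eigenvalues_self_mul_conjTranspose_nonneg A i)).symm

theorem forall_sv_eq_imp_iff_spectrum (A : Matrix (Fin m) (Fin n) ℝ)
    (B : Matrix (Fin p) (Fin q) ℝ) :
    (∀ i j, sv A i = sv B j → sv A i = 0) ↔
      ∀ μ ∈ spectrum ℝ (A * Aᵀ), μ ∈ spectrum ℝ (B * Bᵀ) → μ = 0 := by
  have hsv : ∀ {k l : ℕ} (C : Matrix (Fin k) (Fin l) ℝ) i, 0 ≤ sv C i :=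
    fun _ _ => Real.sqrt_nonneg _
  rw [spectrum_mul_transpose_eq_range_sq_sv, spectrum_mul_transpose_eq_range_sq_sv,
    Set.forall_mem_range]
  refine forall_congr' fun i => ⟨fun h ⟨j, hj⟩ => ?_, fun h j hij => ?_⟩
  · rw [h j ((sq_eq_sq₀ (hsv A i) (hsv B j)).mp hj.symm), zero_pow two_ne_zero]
  · exact pow_eq_zero_iff two_ne_zero |>.mp (h ⟨j, by rw [hij]⟩)

theorem mulVec_injective_conditions_iff (hsum : m + p ≤ n + q)
    (A : Matrix (Fin m) (Fin n) ℝ) (B : Matrix (Fin p) (Fin q) ℝ) :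
    ((Function.Injective Aᵀ.mulVec ∨ Function.Injective B.mulVec) ∧
      (Function.Injective Bᵀ.mulVec ∨ Function.Injective A.mulVec)) ↔
      (m ≤ n ∧ p ≤ q) ∧
      ((LinearIndependent ℝ (fun i => A i) ∧ LinearIndependent ℝ (fun i => B i)) ∨
        (m = n ∧ A.rank = m) ∨ (p = q ∧ B.rank = p)) := by
  have hA : LinearIndependent ℝ (fun i => A i) ↔ A.rank = m :=
    (linearIndependent_row_iff_rank_eq A).trans (by rw [Fintype.card_fin])
  have hB : LinearIndependent ℝ (fun i => B i) ↔ B.rank = p :=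
    (linearIndependent_row_iff_rank_eq B).trans (by rw [Fintype.card_fin])
  have := A.rank_le_width; have := A.rank_le_height
  have := B.rank_le_width; have := B.rank_le_height
  simp only [mulVec_injective_iff_rank_eq, rank_transpose, Fintype.card_fin, hA, hB]
  omega

end Fin

theorem stmt_18 (m n p q : ℕ) (hsum : m + p ≤ n + q)
    (A : Matrix (Fin m) (Fin n) ℝ) (B : Matrix (Fin p) (Fin q) ℝ) :
    HasSSVP (Matrix.fromBlocks A 0 0 B) ↔
      (m ≤ n ∧ p ≤ q) ∧
      (HasSSVP A ∧ HasSSVP B) ∧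
      (∀ i j, sv A i = sv B j → sv A i = 0) ∧
      ((LinearIndependent ℝ (fun i => A i) ∧ LinearIndependent ℝ (fun i => B i)) ∨
        (m = n ∧ A.rank = m) ∨ (p = q ∧ B.rank = p)) := by
  rw [hasSSVP_fromBlocks_iff, offDiagSSVP_iff, forall_sv_eq_imp_iff_spectrum,
    mulVec_injective_conditions_iff hsum]
  tauto
end

section
/- Let A be an m×n real matrix. Then: (a) the orthogonal complement of {K A : K skew-symmetric m×m} in ℝ^{m×n} (with inner product ⟨M,N⟩ = tr(Mᵀ N)) is {X : X Aᵀ is symmetric}; (b) the orthogonal complement of {A L : L skew-symmetric n×n} is {X : Aᵀ X is symmetric}; and consequently A has the SSVP if and only if {K A : K skew} + {A L : L skew} + Span{E_{ij} : A_{ij} ≠ 0} = ℝ^{m×n}. -/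
/-!
Cycling the trace gives `⟨K A, X⟩ = ⟨K, X Aᵀ⟩` and `⟨A L, X⟩ = ⟨L, Aᵀ X⟩`, and a square matrix is
orthogonal to every skew-symmetric matrix exactly when it is symmetric (test it against `S - Sᵀ`).
So the orthogonal complement of `{K A} + {A L} + span {Eᵢⱼ : Aᵢⱼ ≠ 0}` is the set of matrices `X`
in the definition of the SSVP, and since the trace form is nondegenerate on a finite-dimensional
space, that sum is the whole space iff its orthogonal complement is zero.
-/

open Matrix

namespace LinearMap.BilinForm

variable {K V : Type*} [Field K] [AddCommGroup V] [Module K V] [FiniteDimensional K V]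
  {B : LinearMap.BilinForm K V}

lemma orthogonal_eq_bot_iff_eq_top (hB : B.Nondegenerate) (hB₀ : B.IsRefl)
    (W : Submodule K V) : B.orthogonal W = ⊥ ↔ W = ⊤ := by
  refine ⟨fun h ↦ ?_, fun h ↦ h ▸ orthogonal_top_eq_bot hB⟩
  rw [← orthogonal_orthogonal hB hB₀ W, h, orthogonal_bot]

end LinearMap.BilinForm

namespace Matrix

variable {m n : Type*} [Fintype m] [Fintype n]

noncomputable def frobeniusForm : LinearMap.BilinForm ℝ (Matrix m n ℝ) :=
  LinearMap.mk₂ ℝ (fun M N ↦ trace (Mᵀ * N))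
    (fun _ _ _ ↦ by rw [transpose_add, Matrix.add_mul, trace_add])
    (fun _ _ _ ↦ by rw [transpose_smul, Matrix.smul_mul, trace_smul])
    (fun _ _ _ ↦ by rw [Matrix.mul_add, trace_add])
    (fun _ _ _ ↦ by rw [Matrix.mul_smul, trace_smul])

@[simp]
lemma frobeniusForm_apply (M N : Matrix m n ℝ) : frobeniusForm M N = trace (Mᵀ * N) := rfl

lemma frobeniusForm_comm (M N : Matrix m n ℝ) : frobeniusForm M N = frobeniusForm N M := by
  rw [frobeniusForm_apply, ← trace_transpose, transpose_mul, transpose_transpose,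
    frobeniusForm_apply]

lemma frobeniusForm_isRefl : (frobeniusForm : LinearMap.BilinForm ℝ (Matrix m n ℝ)).IsRefl :=
  fun M N h ↦ frobeniusForm_comm M N ▸ h

lemma frobeniusForm_self_eq_zero_iff {M : Matrix m n ℝ} : frobeniusForm M M = 0 ↔ M = 0 := by
  rw [frobeniusForm_apply, ← conjTranspose_eq_transpose_of_trivial,
    trace_conjTranspose_mul_self_eq_zero_iff]

lemma frobeniusForm_nondegenerate :
    (frobeniusForm : LinearMap.BilinForm ℝ (Matrix m n ℝ)).Nondegenerate :=
  frobeniusForm_isRefl.nondegenerate_iff_separatingLeft.mpr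
    fun M h ↦ frobeniusForm_self_eq_zero_iff.mp (h M)

lemma trace_transpose_mul_eq_sum (M N : Matrix m n ℝ) :
    trace (Mᵀ * N) = ∑ i, ∑ j, M i j * N i j := by
  simp only [trace, diag, mul_apply, transpose_apply]
  exact Finset.sum_comm

lemma trace_transpose_mul_transpose_of_skew {K : Matrix m m ℝ} (hK : Kᵀ = -K)
    (S : Matrix m m ℝ) : trace (Kᵀ * Sᵀ) = -trace (Kᵀ * S) := by
  rw [← transpose_mul, trace_transpose, trace_mul_comm, hK, Matrix.neg_mul, trace_neg, neg_neg]

lemma forall_skew_trace_transpose_mul_eq_zero_iff (S : Matrix m m ℝ) :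
    (∀ K : Matrix m m ℝ, Kᵀ = -K → trace (Kᵀ * S) = 0) ↔ S.IsSymm := by
  refine ⟨fun h ↦ ?_, fun hS K hK ↦ ?_⟩
  · have hK : (S - Sᵀ)ᵀ = -(S - Sᵀ) := by rw [transpose_sub, transpose_transpose, neg_sub]
    have hself : trace ((S - Sᵀ)ᵀ * (S - Sᵀ)) = 0 := by
      rw [Matrix.mul_sub, trace_sub, trace_transpose_mul_transpose_of_skew hK, h _ hK,
        neg_zero, sub_zero]
    exact (sub_eq_zero.mp (frobeniusForm_self_eq_zero_iff.mp hself)).symm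
  · have hneg := trace_transpose_mul_transpose_of_skew hK S
    rw [hS.eq] at hneg
    linarith

lemma orthogonal_skew_mul_iff_isSymm_mul_transpose (A X : Matrix m n ℝ) :
    (∀ K : Matrix m m ℝ, Kᵀ = -K → trace ((K * A)ᵀ * X) = 0) ↔ (X * Aᵀ).IsSymm := by
  have hcycle (K : Matrix m m ℝ) : trace ((K * A)ᵀ * X) = trace (Kᵀ * (X * Aᵀ)) := by
    rw [transpose_mul, Matrix.mul_assoc, trace_mul_comm, Matrix.mul_assoc]
  simp only [hcycle]
  exact forall_skew_trace_transpose_mul_eq_zero_iff _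

lemma orthogonal_mul_skew_iff_isSymm_transpose_mul (A X : Matrix m n ℝ) :
    (∀ L : Matrix n n ℝ, Lᵀ = -L → trace ((A * L)ᵀ * X) = 0) ↔ (Aᵀ * X).IsSymm := by
  simp only [transpose_mul, Matrix.mul_assoc]
  exact forall_skew_trace_transpose_mul_eq_zero_iff _

/-- The sum `{K A : Kᵀ = -K} + {A L : Lᵀ = -L} + span {Eᵢⱼ : Aᵢⱼ ≠ 0}`. -/
def ssvpSubspace (A : Matrix m n ℝ) : Submodule ℝ (Matrix m n ℝ) where
  carrier := {M | ∃ (K : Matrix m m ℝ) (L : Matrix n n ℝ) (R : Matrix m n ℝ),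
    Kᵀ = -K ∧ Lᵀ = -L ∧ (∀ i j, A i j = 0 → R i j = 0) ∧ M = K * A + A * L + R}
  add_mem' := by
    rintro _ _ ⟨K, L, R, hK, hL, hR, rfl⟩ ⟨K', L', R', hK', hL', hR', rfl⟩
    refine ⟨K + K', L + L', R + R', ?_, ?_, fun i j h ↦ ?_, ?_⟩
    · rw [transpose_add, hK, hK', neg_add]
    · rw [transpose_add, hL, hL', neg_add]
    · rw [add_apply, hR i j h, hR' i j h, add_zero]
    · rw [Matrix.add_mul, Matrix.mul_add]
      abel
  zero_mem' := ⟨0, 0, 0, by simp, by simp, fun _ _ _ ↦ rfl, by simp⟩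
  smul_mem' := by
    rintro c _ ⟨K, L, R, hK, hL, hR, rfl⟩
    refine ⟨c • K, c • L, c • R, ?_, ?_, fun i j h ↦ ?_, ?_⟩
    · rw [transpose_smul, hK, smul_neg]
    · rw [transpose_smul, hL, smul_neg]
    · rw [smul_apply, hR i j h, smul_zero]
    · rw [smul_add, smul_add, Matrix.smul_mul, Matrix.mul_smul]

lemma mem_orthogonal_ssvpSubspace_iff {A X : Matrix m n ℝ} :
    X ∈ frobeniusForm.orthogonal (ssvpSubspace A) ↔
      (X * Aᵀ).IsSymm ∧ (Aᵀ * X).IsSymm ∧ ∀ i j, A i j ≠ 0 → X i j = 0 := by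
  simp only [LinearMap.BilinForm.mem_orthogonal_iff, frobeniusForm_apply]
  constructor
  · intro h
    refine ⟨(orthogonal_skew_mul_iff_isSymm_mul_transpose A X).mp fun K hK ↦
        h _ ⟨K, 0, 0, hK, by simp, by simp, by simp⟩,
      (orthogonal_mul_skew_iff_isSymm_transpose_mul A X).mp fun L hL ↦
        h _ ⟨0, L, 0, by simp, hL, by simp, by simp⟩, fun i j hij ↦ ?_⟩
    classical
    have hsingle : single i j (1 : ℝ) ∈ ssvpSubspace A := by
      refine ⟨0, 0, single i j 1, by simp, by simp, fun i' j' h' ↦ ?_, by simp⟩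
      rw [single_apply_of_ne]
      rintro ⟨rfl, rfl⟩
      exact hij h'
    simpa [transpose_single, trace_single_mul] using h _ hsingle
  · rintro ⟨hKA, hAL, hsupp⟩ _ ⟨K, L, R, hK, hL, hR, rfl⟩
    have hR : trace (Rᵀ * X) = 0 := by
      rw [trace_transpose_mul_eq_sum]
      refine Finset.sum_eq_zero fun i _ ↦ Finset.sum_eq_zero fun j _ ↦ ?_
      by_cases hij : A i j = 0
      · rw [hR i j hij, zero_mul]
      · rw [hsupp i j hij, mul_zero]
    rw [transpose_add, transpose_add, Matrix.add_mul, Matrix.add_mul, trace_add, trace_add, hR,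
      (orthogonal_skew_mul_iff_isSymm_mul_transpose A X).mpr hKA K hK,
      (orthogonal_mul_skew_iff_isSymm_transpose_mul A X).mpr hAL L hL, add_zero, add_zero]

lemma hasSSVP_iff_orthogonal_ssvpSubspace_eq_bot (A : Matrix m n ℝ) :
    HasSSVP A ↔ frobeniusForm.orthogonal (ssvpSubspace A) = ⊥ := by
  simp only [Submodule.eq_bot_iff, mem_orthogonal_ssvpSubspace_iff, and_imp]
  rfl

lemma hasSSVP_iff_ssvpSubspace_eq_top (A : Matrix m n ℝ) :
    HasSSVP A ↔ ssvpSubspace A = ⊤ := by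
  rw [hasSSVP_iff_orthogonal_ssvpSubspace_eq_bot, LinearMap.BilinForm.orthogonal_eq_bot_iff_eq_top
    frobeniusForm_nondegenerate frobeniusForm_isRefl]

end Matrix

theorem stmt_19 (m n : ℕ) (A : Matrix (Fin m) (Fin n) ℝ) :
    (∀ X : Matrix (Fin m) (Fin n) ℝ,
      (∀ K : Matrix (Fin m) (Fin m) ℝ, Kᵀ = -K →
        Matrix.trace ((K * A)ᵀ * X) = 0) ↔ (X * Aᵀ).IsSymm) ∧
    (∀ X : Matrix (Fin m) (Fin n) ℝ,
      (∀ L : Matrix (Fin n) (Fin n) ℝ, Lᵀ = -L →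
        Matrix.trace ((A * L)ᵀ * X) = 0) ↔ (Aᵀ * X).IsSymm) ∧
    (HasSSVP A ↔
      ∀ M : Matrix (Fin m) (Fin n) ℝ,
        ∃ (K : Matrix (Fin m) (Fin m) ℝ) (L : Matrix (Fin n) (Fin n) ℝ)
          (R : Matrix (Fin m) (Fin n) ℝ),
          Kᵀ = -K ∧ Lᵀ = -L ∧ (∀ i j, A i j = 0 → R i j = 0) ∧
          M = K * A + A * L + R) := by
  refine ⟨orthogonal_skew_mul_iff_isSymm_mul_transpose A,
    orthogonal_mul_skew_iff_isSymm_transpose_mul A, ?_⟩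
  rw [hasSSVP_iff_ssvpSubspace_eq_top, Submodule.eq_top_iff']
  rfl
end
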